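/- arXiv:2404.11125 — 4 statements merged into one kernel-verified Lean document; each statement's English description precedes it below -/
import Mathlib

section
/- Redistribution-of-mass identity (unbiasedness of the interval-censoring weights): let μ be an atomless probability measure on ℝ whose CDF F(t) = μ((−∞, t]) is strictly increasing, let τ ∈ (0,1), and let q ∈ ℝ satisfy F(q) = τ. Let L < R be real numbers with F(L) ≠ τ, and define the weight w by: w = 1 if F(L) > τ; w = (τ − F(L))/(F(R) − F(L)) if F(L) < τ < F(R); w = 0 if F(R) ≤ τ. Then μ({t : L < t < R}) > 0 and w·1{L ≤ q} + (1 − w)·1{R ≤ q} = μ({t : L < t < R and t ≤ q}) / μ({t : L < t < R}); that is, the weighted combination of the endpoint indicators equals the conditional probability P(T ≤ q | L < T < R) for T with law μ. -/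
open MeasureTheory

/-- Redistribution-of-mass identity (unbiasedness of the interval-censoring weights):
let `μ` be an atomless probability measure on `ℝ` whose CDF `F(t) = μ((−∞, t])` is strictly
increasing, `τ ∈ (0,1)`, `q` a `τ`-th quantile with `F(q) = τ`, and `L < R` with `F(L) ≠ τ`.
Define `w = 1` if `F(L) > τ`, `w = (τ − F(L))/(F(R) − F(L))` if `F(L) < τ < F(R)`, and `w = 0`
if `F(R) ≤ τ`. Then `μ({t : L < t < R}) > 0` and
`w·1{L ≤ q} + (1 − w)·1{R ≤ q} = μ({t : L < t < R, t ≤ q}) / μ({t : L < t < R})`,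
i.e. the weighted combination of endpoint indicators equals `P(T ≤ q | L < T < R)`. -/
theorem redistribution_of_mass_identity (μ : Measure ℝ) [IsProbabilityMeasure μ]
    (hatomless : ∀ t : ℝ, μ {t} = 0)
    (hmono : StrictMono (fun t : ℝ => (μ (Set.Iic t)).toReal))
    (τ q L R : ℝ) (hτ : τ ∈ Set.Ioo (0 : ℝ) 1)
    (hq : (μ (Set.Iic q)).toReal = τ) (hLR : L < R)
    (hne : (μ (Set.Iic L)).toReal ≠ τ) :
    0 < (μ {t : ℝ | L < t ∧ t < R}).toReal ∧
    (if τ < (μ (Set.Iic L)).toReal then (1 : ℝ)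
      else if (μ (Set.Iic R)).toReal ≤ τ then 0
      else (τ - (μ (Set.Iic L)).toReal) / ((μ (Set.Iic R)).toReal - (μ (Set.Iic L)).toReal))
        * (if L ≤ q then 1 else 0)
    + (1 - (if τ < (μ (Set.Iic L)).toReal then (1 : ℝ)
        else if (μ (Set.Iic R)).toReal ≤ τ then 0
        else (τ - (μ (Set.Iic L)).toReal) / ((μ (Set.Iic R)).toReal - (μ (Set.Iic L)).toReal)))
        * (if R ≤ q then 1 else 0)
      = (μ {t : ℝ | (L < t ∧ t < R) ∧ t ≤ q}).toReal / (μ {t : ℝ | L < t ∧ t < R}).toReal := by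
  classical
  haveI : MeasureTheory.NullSingletonClass μ := ⟨hatomless⟩
  have hIoc : ∀ a b : ℝ, a ≤ b →
      (μ (Set.Ioc a b)).toReal = (μ (Set.Iic b)).toReal - (μ (Set.Iic a)).toReal := by
    intro a b hab
    have hu : μ (Set.Iic a) + μ (Set.Ioc a b) = μ (Set.Iic b) := by
      rw [← measure_union (Set.Iic_disjoint_Ioc le_rfl) measurableSet_Ioc,
        Set.Iic_union_Ioc_eq_Iic hab]
    have := congrArg ENNReal.toReal hu
    rw [ENNReal.toReal_add (measure_ne_top μ _) (measure_ne_top μ _)] at this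
    linarith
  have hIoo : ∀ a b : ℝ, μ (Set.Ioo a b) = μ (Set.Ioc a b) := fun a b =>
    measure_congr MeasureTheory.Ioo_ae_eq_Ioc
  have hset : {t : ℝ | L < t ∧ t < R} = Set.Ioo L R := rfl
  have hden : (μ {t : ℝ | L < t ∧ t < R}).toReal
      = (μ (Set.Iic R)).toReal - (μ (Set.Iic L)).toReal := by
    rw [hset, hIoo, hIoc L R hLR.le]
  have hFLR : (μ (Set.Iic L)).toReal < (μ (Set.Iic R)).toReal := hmono hLR
  have hpos : 0 < (μ {t : ℝ | L < t ∧ t < R}).toReal := by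
    rw [hden]; linarith
  refine ⟨hpos, ?_⟩
  by_cases h1 : τ < (μ (Set.Iic L)).toReal
  · have hqL : q < L := hmono.lt_iff_lt.mp (by rw [hq]; exact h1)
    have hLq : ¬ L ≤ q := not_le.mpr hqL
    have hRq : ¬ R ≤ q := not_le.mpr (hqL.trans hLR)
    have hnum : {t : ℝ | (L < t ∧ t < R) ∧ t ≤ q} = ∅ := by
      ext t
      simp only [Set.mem_setOf_eq, Set.mem_empty_iff_false, iff_false, not_and]
      rintro ⟨ha, _⟩ h2; linarith
    rw [hnum]
    simp [h1, hLq, hRq]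
  · push_neg at h1
    have h1' : (μ (Set.Iic L)).toReal < τ := lt_of_le_of_ne h1 hne
    have hLq : L < q := hmono.lt_iff_lt.mp (by rw [hq]; exact h1')
    by_cases h2 : (μ (Set.Iic R)).toReal ≤ τ
    · have hRq : R ≤ q := hmono.le_iff_le.mp (by rw [hq]; exact h2)
      have hnum : {t : ℝ | (L < t ∧ t < R) ∧ t ≤ q} = {t : ℝ | L < t ∧ t < R} := by
        ext t
        simp only [Set.mem_setOf_eq, and_iff_left_iff_imp]
        rintro ⟨_, hb⟩; exact hb.le.trans hRq
      rw [hnum, div_self (ne_of_gt hpos),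
        if_neg (not_lt.mpr h1), if_pos h2, if_pos hLq.le, if_pos hRq]
      ring
    · push_neg at h2
      have hqR : q < R := hmono.lt_iff_lt.mp (by rw [hq]; exact h2)
      have hRq : ¬ R ≤ q := not_le.mpr hqR
      have hnum : {t : ℝ | (L < t ∧ t < R) ∧ t ≤ q} = Set.Ioc L q := by
        ext t
        simp only [Set.mem_setOf_eq, Set.mem_Ioc]
        constructor
        · rintro ⟨⟨ha, _⟩, hc⟩; exact ⟨ha, hc⟩
        · rintro ⟨ha, hc⟩; exact ⟨⟨ha, lt_of_le_of_lt hc hqR⟩, hc⟩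
      rw [hnum, hIoc L q hLq.le, hq, hden,
        if_neg (not_lt.mpr h1), if_neg (not_le.mpr h2), if_pos hLq.le, if_neg hRq]
      ring
end

section
/- Stability of the redistribution weight with respect to the underlying distribution values: let τ, δ ∈ ℝ with δ > 0, and let a, b, a′, b′ ∈ ℝ satisfy b − a ≥ δ, a′ < b′, and a′ ≤ τ ≤ b′. Then |(τ − a)/(b − a) − (τ − a′)/(b′ − a′)| ≤ (2|a − a′| + |b − b′|)/δ. (With a = F(L|x), b = F(R|x), a′ = F̂(L|x), b′ = F̂(R|x), this bounds the change in the interval-censoring weight w(F) = (τ − F(L|x))/(F(R|x) − F(L|x)) when the conditional distribution function F is replaced by an estimator F̂.) -/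
/-- Stability of the redistribution weight with respect to the underlying distribution values:
if `δ > 0`, `b − a ≥ δ`, `a' < b'`, and `a' ≤ τ ≤ b'`, then
`|(τ − a)/(b − a) − (τ − a')/(b' − a')| ≤ (2|a − a'| + |b − b'|)/δ`. -/
theorem redistribution_weight_stability (τ δ a b a' b' : ℝ)
    (hδ : 0 < δ) (hab : δ ≤ b - a) (hab' : a' < b') (ha' : a' ≤ τ) (hb' : τ ≤ b') :
    |(τ - a) / (b - a) - (τ - a') / (b' - a')| ≤ (2 * |a - a'| + |b - b'|) / δ := by
  have hD : 0 < b - a := lt_of_lt_of_le hδ hab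
  have hD' : (0:ℝ) < b' - a' := sub_pos.mpr hab'
  have key : (τ - a) / (b - a) - (τ - a') / (b' - a')
      = (a' - a) / (b - a) + (τ - a') * ((b' - a') - (b - a)) / ((b - a) * (b' - a')) := by
    field_simp
    ring
  rw [key]
  have h1 : |(a' - a) / (b - a)| ≤ |a - a'| / δ := by
    rw [abs_div, abs_of_pos hD, abs_sub_comm]
    exact div_le_div_of_nonneg_left (abs_nonneg _) hδ hab
  have h2 : |(τ - a') * ((b' - a') - (b - a)) / ((b - a) * (b' - a'))|
      ≤ (|a - a'| + |b - b'|) / δ := by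
    rw [abs_div, abs_mul, abs_of_pos (mul_pos hD hD')]
    have hτ : |τ - a'| ≤ b' - a' := by
      rw [abs_of_nonneg (sub_nonneg.mpr ha')]; linarith
    calc |τ - a'| * |(b' - a') - (b - a)| / ((b - a) * (b' - a'))
        ≤ (b' - a') * |(b' - a') - (b - a)| / ((b - a) * (b' - a')) := by
          gcongr
      _ = |(b' - a') - (b - a)| / (b - a) := by
          field_simp
      _ ≤ (|a - a'| + |b - b'|) / δ := by
          apply div_le_div₀ (by positivity) _ hδ hab
          calc |(b' - a') - (b - a)| = |(a - a') + (b' - b)| := by ring_nf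
            _ ≤ |a - a'| + |b' - b| := abs_add_le _ _
            _ = |a - a'| + |b - b'| := by rw [abs_sub_comm b' b]
  calc |(a' - a) / (b - a) + (τ - a') * ((b' - a') - (b - a)) / ((b - a) * (b' - a'))|
      ≤ |(a' - a) / (b - a)| + |(τ - a') * ((b' - a') - (b - a)) / ((b - a) * (b' - a'))| :=
        abs_add_le _ _
    _ ≤ |a - a'| / δ + (|a - a'| + |b - b'|) / δ := add_le_add h1 h2
    _ = (2 * |a - a'| + |b - b'|) / δ := by ring
end

section
/- Identification of the quantile regression parameter: let μ be a probability measure on ℝ^p with ∫‖x‖² dμ(x) < ∞ and with the matrix ∫ x xᵀ dμ(x) positive definite. Let F : ℝ^p × ℝ → ℝ be measurable and bounded such that for μ-almost every x the map t ↦ F(x, t) is strictly increasing, and suppose F(x, xᵀβ₀) = τ for μ-almost every x, where τ ∈ (0,1) and β₀ ∈ ℝ^p. Define the population estimating function M(β) = ∫ x (τ − F(x, xᵀβ)) dμ(x) ∈ ℝ^p. Then M(β₀) = 0, and for every β ≠ β₀ one has ⟨β − β₀, M(β)⟩ < 0; in particular, β₀ is the unique zero of M. -/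
open MeasureTheory

/-- Identification of the quantile regression parameter: let `μ` be a probability measure on
`ℝ^p` with `∫‖x‖² dμ < ∞` and with `∫ x xᵀ dμ` positive definite. Let `F : ℝ^p × ℝ → ℝ` be
measurable and bounded with `t ↦ F(x, t)` strictly increasing for `μ`-a.e. `x`, and suppose
`F(x, xᵀβ₀) = τ` for `μ`-a.e. `x`, where `τ ∈ (0,1)`. Define
`M(β) = ∫ x (τ − F(x, xᵀβ)) dμ(x)`. Then `M(β₀) = 0` and `⟨β − β₀, M(β)⟩ < 0` for every
`β ≠ β₀`; in particular `β₀` is the unique zero of `M`. -/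
theorem quantile_identification (p : ℕ) (μ : Measure (Fin p → ℝ)) [IsProbabilityMeasure μ]
    (hX2 : Integrable (fun x : Fin p → ℝ => ‖x‖ ^ 2) μ)
    (hPD : (Matrix.of fun i j : Fin p => ∫ x, x i * x j ∂μ).PosDef)
    (F : (Fin p → ℝ) → ℝ → ℝ)
    (hFmeas : Measurable (fun q : (Fin p → ℝ) × ℝ => F q.1 q.2))
    (hFbdd : ∃ C : ℝ, ∀ x t, |F x t| ≤ C)
    (hFmono : ∀ᵐ x ∂μ, StrictMono (F x))
    (τ : ℝ) (hτ : τ ∈ Set.Ioo (0 : ℝ) 1) (β₀ : Fin p → ℝ)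
    (hquant : ∀ᵐ x ∂μ, F x (∑ j, x j * β₀ j) = τ) :
    (∀ k, (∫ x, x k * (τ - F x (∑ j, x j * β₀ j)) ∂μ) = 0) ∧
    ∀ β : Fin p → ℝ, β ≠ β₀ →
      (∑ k, (β k - β₀ k) * ∫ x, x k * (τ - F x (∑ j, x j * β j)) ∂μ) < 0 := by
  obtain ⟨C, hC⟩ := hFbdd
  -- integrability of coordinates
  have hnorm : Integrable (fun x : Fin p → ℝ => ‖x‖) μ := by
    refine ((integrable_const (1 : ℝ)).add hX2).mono
      measurable_norm.aestronglyMeasurable ?_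
    filter_upwards with x
    have h0 : (0:ℝ) ≤ ‖x‖ := norm_nonneg x
    rw [Real.norm_eq_abs, abs_of_nonneg h0]
    have : ‖x‖ ≤ 1 + ‖x‖ ^ 2 := by nlinarith
    exact this.trans (le_abs_self _)
  have hxk : ∀ k, Integrable (fun x : Fin p → ℝ => x k) μ := by
    intro k
    refine hnorm.mono (measurable_pi_apply k).aestronglyMeasurable ?_
    filter_upwards with x
    rw [Real.norm_eq_abs ‖x‖, abs_of_nonneg (norm_nonneg x)]
    exact norm_le_pi_norm x k
  have hxij : ∀ i j, Integrable (fun x : Fin p → ℝ => x i * x j) μ := by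
    intro i j
    refine hX2.mono ((measurable_pi_apply i).mul (measurable_pi_apply j)).aestronglyMeasurable ?_
    filter_upwards with x
    have hi : |x i| ≤ ‖x‖ := by simpa [Real.norm_eq_abs] using norm_le_pi_norm x i
    have hj : |x j| ≤ ‖x‖ := by simpa [Real.norm_eq_abs] using norm_le_pi_norm x j
    have h0 : (0:ℝ) ≤ ‖x‖ := norm_nonneg x
    calc ‖x i * x j‖ = |x i| * |x j| := by rw [Real.norm_eq_abs, abs_mul]
      _ ≤ ‖x‖ * ‖x‖ := mul_le_mul hi hj (abs_nonneg _) h0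
      _ ≤ ‖‖x‖ ^ 2‖ := by rw [Real.norm_eq_abs, abs_of_nonneg (by positivity)]; nlinarith
  have hFm : ∀ β : Fin p → ℝ, Measurable (fun x : Fin p → ℝ => F x (∑ j, x j * β j)) := by
    intro β
    have hm : Measurable fun x : Fin p → ℝ => (x, ∑ j, x j * β j) :=
      measurable_id.prodMk
        (Finset.measurable_sum _ fun j _ => (measurable_pi_apply j).mul_const _)
    exact hFmeas.comp hm
  have hGint : ∀ (β : Fin p → ℝ) k,
      Integrable (fun x => x k * (τ - F x (∑ j, x j * β j))) μ := by
    intro β k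
    have := (hxk k).bdd_mul ((measurable_const.sub (hFm β)).aestronglyMeasurable)
      (Filter.Eventually.of_forall (fun x => by
        have := hC x (∑ j, x j * β j)
        rw [Real.norm_eq_abs]
        calc |τ - F x (∑ j, x j * β j)| ≤ |τ| + |F x (∑ j, x j * β j)| := abs_sub _ _
          _ ≤ |τ| + C := by linarith))
    simpa [mul_comm] using this
  constructor
  · intro k
    have h0 : (fun x => x k * (τ - F x (∑ j, x j * β₀ j))) =ᵐ[μ] 0 := by
      filter_upwards [hquant] with x hx
      simp [hx]
    rw [integral_congr_ae h0]; simp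
  · intro β hβ
    set v : Fin p → ℝ := fun k => β k - β₀ k with hv
    have hvne : v ≠ 0 := by
      intro h
      apply hβ
      funext k
      have := congrFun h k
      simp [hv] at this
      linarith
    set G : (Fin p → ℝ) → ℝ := fun x => τ - F x (∑ j, x j * β j) with hG
    set s : (Fin p → ℝ) → ℝ := fun x => ∑ k, v k * x k with hs
    have hsint : Integrable s μ :=
      integrable_finset_sum _ fun k _ => (hxk k).const_mul (v k)
    have hsGint : Integrable (fun x => s x * G x) μ := by
      have h1 : Integrable (fun x => (τ - F x (∑ j, x j * β j)) * s x) μ :=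
        hsint.bdd_mul ((measurable_const.sub (hFm β)).aestronglyMeasurable)
          (Filter.Eventually.of_forall (fun x => by
            have := hC x (∑ j, x j * β j)
            rw [Real.norm_eq_abs]
            calc |τ - F x (∑ j, x j * β j)| ≤ |τ| + |F x (∑ j, x j * β j)| := abs_sub _ _
              _ ≤ |τ| + C := by linarith))
      exact h1.congr (Filter.Eventually.of_forall fun x => mul_comm _ _)
    have hsum : (∑ k, (β k - β₀ k) * ∫ x, x k * G x ∂μ) = ∫ x, s x * G x ∂μ := by
      have : ∀ k : Fin p, (β k - β₀ k) * ∫ x, x k * G x ∂μ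
          = ∫ x, v k * (x k * G x) ∂μ := fun k => (integral_const_mul _ _).symm
      rw [Finset.sum_congr rfl fun k _ => this k,
        ← integral_finset_sum _ fun k _ => ((hGint β k).const_mul (v k))]
      congr 1
      funext x
      simp only [hs, Finset.sum_mul]
      exact Finset.sum_congr rfl fun k _ => by ring
    rw [hsum]
    -- pointwise a.e. sign property
    have hae : ∀ᵐ x ∂μ, s x * G x ≤ 0 ∧ (s x * G x = 0 → s x = 0) := by
      filter_upwards [hFmono, hquant] with x hmono hq
      have hsx : s x = (∑ j, x j * β j) - (∑ j, x j * β₀ j) := by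
        simp only [hs, hv, ← Finset.sum_sub_distrib]
        exact Finset.sum_congr rfl fun k _ => by ring
      rcases lt_trichotomy (s x) 0 with h | h | h
      · have ht : (∑ j, x j * β j) < (∑ j, x j * β₀ j) := by linarith [hsx ▸ h]
        have : F x (∑ j, x j * β j) < τ := hq ▸ hmono ht
        have hGpos : 0 < G x := by simp only [hG]; linarith
        constructor
        · exact le_of_lt (mul_neg_of_neg_of_pos h hGpos)
        · intro h0; exact absurd h0 (ne_of_lt (mul_neg_of_neg_of_pos h hGpos))
      · simp [h]
      · have ht : (∑ j, x j * β₀ j) < (∑ j, x j * β j) := by linarith [hsx ▸ h]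
        have : τ < F x (∑ j, x j * β j) := hq ▸ hmono ht
        have hGneg : G x < 0 := by simp only [hG]; linarith
        constructor
        · exact le_of_lt (mul_neg_of_pos_of_neg h hGneg)
        · intro h0; exact absurd h0 (ne_of_lt (mul_neg_of_pos_of_neg h hGneg))
    have hle : ∫ x, s x * G x ∂μ ≤ 0 :=
      integral_nonpos_of_ae (by filter_upwards [hae] with x hx using hx.1)
    rcases hle.lt_or_eq with h | h
    · exact h
    · exfalso
      -- equality forces s = 0 a.e.
      have hzero : (fun x => -(s x * G x)) =ᵐ[μ] 0 := by
        have hint : Integrable (fun x => -(s x * G x)) μ := hsGint.neg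
        have h0 : ∫ x, -(s x * G x) ∂μ = 0 := by rw [integral_neg, h, neg_zero]
        exact (integral_eq_zero_iff_of_nonneg_ae
          (by filter_upwards [hae] with x hx; simpa using hx.1) hint).mp h0
      have hs0 : ∀ᵐ x ∂μ, s x = 0 := by
        filter_upwards [hae, hzero] with x hx hx0
        exact hx.2 (by simpa using (neg_eq_zero.mp hx0))
      -- contradiction with positive definiteness
      have hquad : (0:ℝ) < dotProduct (star v)
          (Matrix.mulVec (Matrix.of fun i j : Fin p => ∫ x, x i * x j ∂μ) v) := hPD.dotProduct_mulVec_pos hvne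
      have hexp : dotProduct (star v)
          (Matrix.mulVec (Matrix.of fun i j : Fin p => ∫ x, x i * x j ∂μ) v)
          = ∫ x, s x * s x ∂μ := by
        have h1 : ∀ x : Fin p → ℝ, s x * s x
            = ∑ i, ∑ j, v i * v j * (x i * x j) := by
          intro x
          simp only [hs, Finset.sum_mul_sum]
          exact Finset.sum_congr rfl fun i _ => Finset.sum_congr rfl fun j _ => by ring
        rw [show (∫ x, s x * s x ∂μ) = ∫ x, ∑ i, ∑ j, v i * v j * (x i * x j) ∂μ from by
            simp_rw [h1],
          integral_finset_sum _ fun i _ =>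
            integrable_finset_sum _ fun j _ => ((hxij i j).const_mul _)]
        simp only [dotProduct, Matrix.mulVec, Matrix.of_apply, Pi.star_apply,
          star_trivial, dotProduct, Finset.mul_sum]
        refine Finset.sum_congr rfl fun i _ => ?_
        rw [integral_finset_sum _ fun j _ => ((hxij i j).const_mul _)]
        refine Finset.sum_congr rfl fun j _ => ?_
        rw [integral_const_mul]
        ring
      have hss : (∫ x, s x * s x ∂μ) = 0 := by
        rw [integral_congr_ae (g := fun _ => (0:ℝ))
          (by filter_upwards [hs0] with x hx; simp [hx])]
        simp
      rw [hexp, hss] at hquad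
      exact lt_irrefl _ hquad
end

section
/- The self-consistency equation implies the quantile estimating equation: let τ ∈ (0,1), let (Δ_i, T_i, L_i, R_i), i = 1,…,n, be data with Δ_i ∈ {0,1} and L_i ≤ R_i, let F̂ : ℝ → ℝ be a function with F̂(R_i) ≠ F̂(L_i) for every i with Δ_i = 0, and let t ∈ ℝ satisfy F̂(t) = τ. If the self-consistency equation n^{-1} Σ_{i=1}^n [ Δ_i 1{T_i < t} + (1 − Δ_i) (F̂(min(R_i, t)) − F̂(min(L_i, t)))/(F̂(R_i) − F̂(L_i)) ] = F̂(t) holds at t, then n^{-1} Σ_{i=1}^n [ Δ_i 1{T_i < t} + (1 − Δ_i){ ((τ − F̂(L_i))/(F̂(R_i) − F̂(L_i)))·1{L_i < t} + ((F̂(R_i) − τ)/(F̂(R_i) − F̂(L_i)))·1{R_i < t} } ] = τ. -/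
/-- The self-consistency equation implies the quantile estimating equation: let `τ ∈ (0,1)`,
let `(Δᵢ, Tᵢ, Lᵢ, Rᵢ)` be data with `Δᵢ ∈ {0,1}` and `Lᵢ ≤ Rᵢ`, let `F̂ : ℝ → ℝ` satisfy
`F̂(Rᵢ) ≠ F̂(Lᵢ)` whenever `Δᵢ = 0`, and let `t` satisfy `F̂(t) = τ`. If
`n⁻¹ ∑ᵢ [Δᵢ 1{Tᵢ < t} + (1 − Δᵢ)(F̂(min(Rᵢ,t)) − F̂(min(Lᵢ,t)))/(F̂(Rᵢ) − F̂(Lᵢ))] = F̂(t)`,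
then
`n⁻¹ ∑ᵢ [Δᵢ 1{Tᵢ < t} + (1 − Δᵢ){((τ − F̂(Lᵢ))/(F̂(Rᵢ) − F̂(Lᵢ)))·1{Lᵢ < t}
  + ((F̂(Rᵢ) − τ)/(F̂(Rᵢ) − F̂(Lᵢ)))·1{Rᵢ < t}}] = τ`. -/
theorem self_consistency_implies_quantile_equation
    (τ : ℝ) (hτ : τ ∈ Set.Ioo (0 : ℝ) 1) (n : ℕ)
    (Δ T L R : Fin n → ℝ) (hΔ : ∀ i, Δ i = 0 ∨ Δ i = 1) (hLR : ∀ i, L i ≤ R i)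
    (Fhat : ℝ → ℝ) (hne : ∀ i, Δ i = 0 → Fhat (R i) ≠ Fhat (L i))
    (t : ℝ) (ht : Fhat t = τ)
    (hsc : (n : ℝ)⁻¹ * ∑ i, (Δ i * (if T i < t then 1 else 0)
        + (1 - Δ i) * ((Fhat (min (R i) t) - Fhat (min (L i) t))
            / (Fhat (R i) - Fhat (L i)))) = Fhat t) :
    (n : ℝ)⁻¹ * ∑ i, (Δ i * (if T i < t then 1 else 0)
        + (1 - Δ i) * (((τ - Fhat (L i)) / (Fhat (R i) - Fhat (L i)))
              * (if L i < t then 1 else 0)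
            + ((Fhat (R i) - τ) / (Fhat (R i) - Fhat (L i)))
              * (if R i < t then 1 else 0))) = τ := by
  rw [ht] at hsc
  have key : ∑ i, (Δ i * (if T i < t then 1 else 0)
        + (1 - Δ i) * (((τ - Fhat (L i)) / (Fhat (R i) - Fhat (L i)))
              * (if L i < t then 1 else 0)
            + ((Fhat (R i) - τ) / (Fhat (R i) - Fhat (L i)))
              * (if R i < t then 1 else 0)))
      = ∑ i, (Δ i * (if T i < t then 1 else 0)
        + (1 - Δ i) * ((Fhat (min (R i) t) - Fhat (min (L i) t))
            / (Fhat (R i) - Fhat (L i)))) := by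
    apply Finset.sum_congr rfl
    intro i _
    rcases hΔ i with h | h
    · congr 1
      congr 1
      rcases lt_or_ge (L i) t with hL | hL
      · rcases lt_or_ge (R i) t with hR | hR
        · rw [min_eq_left hR.le, min_eq_left hL.le, if_pos hL, if_pos hR]
          ring
        · rw [min_eq_right hR, min_eq_left hL.le, if_pos hL, if_neg (not_lt.mpr hR), ht]
          ring
      · have hR : t ≤ R i := hL.trans (hLR i)
        rw [min_eq_right hR, min_eq_right hL, if_neg (not_lt.mpr hL), if_neg (not_lt.mpr hR)]
        simp
    · rw [h]; ring
  rw [key, hsc]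
end
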